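/- Let F be a 3-graph with at least one edge. If limsup_{n→∞} co⁺ex(n, F)/n > 0, then limsup_{n→∞} co⁺ex(n, F)/n ≥ 1/3. -/

import Mathlib

open Finset

/-- The co-degree of a vertex set `S` in the hypergraph with edge set `E`:
the number of edges containing `S`. -/
def coDeg {n : ℕ} (E : Finset (Finset (Fin n))) (S : Finset (Fin n)) : ℕ :=
  (E.filter (fun e => S ⊆ e)).card

/-- The minimum positive co-degree `δ⁺_{r-1}` of an `r`-graph on `Fin n` with edge set `E`:
the largest `k` such that every `(r-1)`-set of vertices contained in at least one edge is
contained in at least `k` edges (i.e. the minimum of the positive co-degrees). -/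
noncomputable def minPosCoDeg (r n : ℕ) (E : Finset (Finset (Fin n))) : ℕ :=
  sInf {d : ℕ | ∃ S : Finset (Fin n), S.card = r - 1 ∧ coDeg E S = d ∧ 0 < d}

/-- `E` contains a copy of `F`: an injection of the vertices of `F` mapping
edges of `F` to edges of `E`. -/
def Contains {α β : Type*} [DecidableEq α] [DecidableEq β]
    (F : Finset (Finset α)) (E : Finset (Finset β)) : Prop :=
  ∃ f : α → β, Function.Injective f ∧ ∀ e ∈ F, e.image f ∈ E

/-- The positive co-degree Turán number `co⁺ex_r(n, F)`: the maximum of the minimum positive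
co-degree over all `F`-free `r`-graphs on `n` vertices with at least one edge. -/
noncomputable def coPlusEx {α : Type*} [DecidableEq α] (r n : ℕ) (F : Finset (Finset α)) : ℕ :=
  sSup {d : ℕ | ∃ E : Finset (Finset (Fin n)),
    (∀ e ∈ E, e.card = r) ∧ E.Nonempty ∧ ¬ Contains F E ∧ minPosCoDeg r n E = d}


def K4minus : Finset (Finset (Fin 4)) := {{0,1,2}, {0,1,3}, {0,2,3}}

def K4 : Finset (Finset (Fin 4)) := {{0,1,2}, {0,1,3}, {0,2,3}, {1,2,3}}

def F5 : Finset (Finset (Fin 5)) := {{0,1,2}, {0,1,3}, {2,3,4}}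

def F32 : Finset (Finset (Fin 5)) := {{0,1,2}, {0,3,4}, {1,3,4}, {2,3,4}}

def Fano : Finset (Finset (Fin 7)) :=
  {{0,1,2}, {2,3,4}, {0,4,5}, {1,3,5}, {0,3,6}, {1,4,6}, {2,5,6}}

def F33 : Finset (Finset (Fin 6)) :=
  {{0,1,2}, {0,3,4}, {0,3,5}, {0,4,5}, {1,3,4}, {1,3,5}, {1,4,5}, {2,3,4}, {2,3,5}, {2,4,5}}

def C5 : Finset (Finset (Fin 5)) := {{0,1,2}, {1,2,3}, {2,3,4}, {0,3,4}, {0,1,4}}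

def C5minus : Finset (Finset (Fin 5)) := {{0,1,2}, {1,2,3}, {2,3,4}, {0,3,4}}

def K222 : Finset (Finset (Fin 6)) :=
  {{0,2,4}, {0,2,5}, {0,3,4}, {0,3,5}, {1,2,4}, {1,2,5}, {1,3,4}, {1,3,5}}

/-- `J k`: the 3-graph on `k+1` vertices whose edges are all triples containing the
distinguished vertex `0`. -/
def Jgraph (k : ℕ) : Finset (Finset (Fin (k+1))) :=
  (Finset.univ.powersetCard 3).filter (fun e => (0 : Fin (k+1)) ∈ e)

/-- `E` is (isomorphic to) the complete balanced `k`-partite 3-graph on `n` vertices: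
there is a partition of the vertices into `k` classes whose sizes differ by at most one,
such that the edges are exactly the triples of vertices in three pairwise distinct classes. -/
def IsCompleteBalancedMultipartite (n k : ℕ) (E : Finset (Finset (Fin n))) : Prop :=
  ∃ f : Fin n → Fin k,
    (∀ i j : Fin k, (Finset.univ.filter (fun v => f v = i)).card ≤
      (Finset.univ.filter (fun v => f v = j)).card + 1) ∧
    ∀ e : Finset (Fin n), e ∈ E ↔ (e.card = 3 ∧ (e.image f).card = 3)

/-- The unique (6,3,2)-design `H₆`. -/
def H6 : Finset (Finset (Fin 6)) :=
  {{0,1,2}, {0,1,3}, {2,3,4}, {2,3,5}, {0,4,5}, {1,4,5}, {0,2,4}, {0,3,5}, {1,2,5}, {1,3,4}}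

/-- `E` is (isomorphic to) a balanced blow-up of `H₆` on `n` vertices: the vertices are
partitioned into six classes of equal size, and the edges are exactly the triples whose
three vertices lie in classes forming an edge of `H₆`. -/
def IsBalancedH6Blowup (n : ℕ) (E : Finset (Finset (Fin n))) : Prop :=
  ∃ f : Fin n → Fin 6,
    (∀ i j : Fin 6, (Finset.univ.filter (fun v => f v = i)).card =
      (Finset.univ.filter (fun v => f v = j)).card) ∧
    ∀ e : Finset (Fin n), e ∈ E ↔ (e.card = 3 ∧ e.image f ∈ H6)

open Filter Topology

/-!
If `F` is not 3-partite, it is not contained in the balanced complete 3-partite 3-graph on `n`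
vertices, whose minimum positive co-degree is at least `⌊n/3⌋`; hence the limsup is `≥ 1/3`.

If `F` is 3-partite, on `t` vertices say, the limit is `0`. Let `E` be a 3-graph with
`δ₂⁺(E) = c > n/k` and `n` large. Every vertex of a pair of positive co-degree lies in at least `c`
such pairs, so the shadow graph of `E` has at least `c²/2` edges. Averaging over the `t`-subsets of
the links of these pairs gives a `t`-set `A` lying in the links of `Ω(n²)` pairs; the pairs
avoiding `A` still form a graph with `Ω(n²)` edges. A Kővári–Sós–Turán count finds a `K_{t,t}` in
it, which together with `A` spans a complete 3-partite `K(t,t,t) ⊆ E`, and `K(t,t,t)` contains `F`.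
-/

theorem exists_card_eq_and_le_card_filter_subset {V β : Type*} [Fintype V] [DecidableEq V]
    (P : Finset β) (N : β → Finset V) {t m : ℕ} (ht : t ≤ Fintype.card V)
    (h : (Fintype.card V).choose t * m ≤ ∑ S ∈ P, (N S).card.choose t) :
    ∃ A : Finset V, #A = t ∧ m ≤ #{S ∈ P | A ⊆ N S} := by
  have double_count : ∑ A ∈ univ.powersetCard t, #{S ∈ P | A ⊆ N S} =
      ∑ S ∈ P, (N S).card.choose t := by
    simp_rw [card_filter]
    rw [sum_comm]
    refine sum_congr rfl fun S _ => ?_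
    rw [← card_filter, ← card_powersetCard]
    congr 1
    ext A
    simp [mem_powersetCard, and_comm]
  obtain ⟨A, hA, hmA⟩ := exists_le_of_sum_le (s := (univ : Finset V).powersetCard t)
    (f := fun _ => m) (g := fun A => #{S ∈ P | A ⊆ N S})
    (powersetCard_nonempty.mpr (by rwa [card_univ])) (by
      rwa [sum_const, card_powersetCard, card_univ, smul_eq_mul, double_count])
  exact ⟨A, (mem_powersetCard.mp hA).2, hmA⟩

theorem Nat.pow_le_two_pow_mul_descFactorial {a t : ℕ} (h : 2 * t ≤ a + 2) :
    a ^ t ≤ 2 ^ t * a.descFactorial t :=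
  calc a ^ t ≤ (2 * (a + 1 - t)) ^ t := Nat.pow_le_pow_left (by omega) t
    _ = 2 ^ t * (a + 1 - t) ^ t := mul_pow ..
    _ ≤ 2 ^ t * a.descFactorial t := Nat.mul_le_mul_left _ (Nat.pow_sub_le_descFactorial a t)

theorem Nat.mul_choose_le_mul_choose_of_descFactorial {a b t X Y : ℕ}
    (h : Y * b.descFactorial t ≤ X * a.descFactorial t) : Y * b.choose t ≤ X * a.choose t := by
  simp only [Nat.descFactorial_eq_factorial_mul_choose, mul_left_comm _ t.factorial] at h
  exact Nat.le_of_mul_le_mul_left h t.factorial_pos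

-- The two inequalities are the hypotheses of `exists_completeTripartite_of_le_minPosCoDeg`;
-- `d = c / K` with `K = 2 ^ (t + 2) * k ^ (t + 1)` satisfies both once `c / K > t (4kK)^t + 2t`.
theorem exists_codegree_threshold (t k : ℕ) : ∃ c₀, ∀ c n, c₀ ≤ c → n < k * c → ∃ d,
    2 * ((d + t) * n) * n.choose t ≤ c * c * c.choose t ∧ t * n.choose t ≤ d * d.choose t := by
  obtain ⟨K, hKdef⟩ : ∃ K, K = 2 ^ (t + 2) * k ^ (t + 1) := ⟨_, rfl⟩
  refine ⟨K * (t * (4 * k * K) ^ t + 2 * t + 1), fun c n hc hn => ⟨c / K, ?_⟩⟩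
  have hk : 1 ≤ k := Nat.pos_of_ne_zero (by rintro rfl; simp at hn)
  have hK : 0 < K := by rw [hKdef]; positivity
  have hd : t * (4 * k * K) ^ t + 2 * t + 1 ≤ c / K := (Nat.le_div_iff_mul_le hK).2 (by linarith)
  have hnt : n ^ t ≤ k ^ t * c ^ t := by rw [← mul_pow]; exact Nat.pow_le_pow_left hn.le t
  refine ⟨?_, ?_⟩ <;> refine Nat.mul_choose_le_mul_choose_of_descFactorial
    (Nat.le_of_mul_le_mul_left ?_ (Nat.two_pow_pos t))
  · have hKd : K * (c / K) ≤ c := Nat.mul_div_le c K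
    have hct : 2 * t ≤ c + 2 := by have := Nat.div_le_self c K; omega
    calc 2 ^ t * (2 * ((c / K + t) * n) * n.descFactorial t)
        ≤ 2 ^ t * (2 * ((2 * (c / K)) * n) * n ^ t) := by
          gcongr
          · omega
          · exact Nat.descFactorial_le_pow n t
      _ = 2 ^ (t + 2) * (c / K) * (n * n ^ t) := by ring
      _ ≤ 2 ^ (t + 2) * (c / K) * ((k * c) * (k ^ t * c ^ t)) := by gcongr
      _ = (K * (c / K)) * c * c ^ t := by rw [hKdef]; ring
      _ ≤ c * c * (2 ^ t * c.descFactorial t) := by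
          gcongr
          exact Nat.pow_le_two_pow_mul_descFactorial hct
      _ = 2 ^ t * (c * c * c.descFactorial t) := by ring
  · have hcK : c ≤ 2 * K * (c / K) := by
      have h₁ := Nat.lt_mul_div_succ c hK
      have h₂ : K ≤ K * (c / K) := Nat.le_mul_of_pos_right K (by omega)
      rw [mul_add, mul_one] at h₁
      linarith
    calc 2 ^ t * (t * n.descFactorial t) ≤ 2 ^ t * (t * (k ^ t * c ^ t)) := by
          gcongr; exact (Nat.descFactorial_le_pow n t).trans hnt
      _ ≤ 2 ^ t * (t * (k ^ t * (2 * K * (c / K)) ^ t)) := by gcongr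
      _ = t * (4 * k * K) ^ t * (c / K) ^ t := by
          rw [mul_pow, mul_pow, mul_pow, mul_pow, show (4 : ℕ) ^ t = 2 ^ t * 2 ^ t by
            rw [← mul_pow]; norm_num]
          ring
      _ ≤ c / K * (2 ^ t * (c / K).descFactorial t) := by
          gcongr
          · omega
          · exact Nat.pow_le_two_pow_mul_descFactorial (by omega)
      _ = 2 ^ t * (c / K * (c / K).descFactorial t) := by ring

namespace SimpleGraph

variable {V : Type*} [Fintype V] (G : SimpleGraph V) [DecidableRel G.Adj]

theorem le_card_filter_le_degree [Nonempty V] {d : ℕ} (h : d * Fintype.card V ≤ #G.edgeFinset) :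
    d ≤ #{v | d ≤ G.degree v} := by
  refine Nat.le_of_mul_le_mul_right ?_ (Fintype.card_pos (α := V))
  have hsum : ∑ v, G.degree v ≤ #{v | d ≤ G.degree v} * Fintype.card V + Fintype.card V * d := by
    rw [← sum_filter_add_sum_filter_not univ (fun v => d ≤ G.degree v)]
    gcongr
    · exact (sum_le_card_nsmul _ _ _ fun v _ => (G.degree_lt_card_verts v).le).trans_eq
        (smul_eq_mul ..)
    · refine (sum_le_card_nsmul _ _ d fun v hv => ?_).trans ?_
      · exact (not_le.mp (mem_filter.mp hv).2).le
      · rw [smul_eq_mul]; gcongr; exact card_le_univ _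
  rw [sum_degrees_eq_twice_card_edges] at hsum
  linarith

theorem exists_completeBipartite_of_mul_card_le_card_edgeFinset [DecidableEq V] [Nonempty V]
    {t d : ℕ} (ht : t ≤ Fintype.card V) (hd : t * (Fintype.card V).choose t ≤ d * d.choose t)
    (hG : d * Fintype.card V ≤ #G.edgeFinset) :
    ∃ B C : Finset V, #B = t ∧ #C = t ∧ ∀ b ∈ B, ∀ c ∈ C, G.Adj b c := by
  have hsum : d * d.choose t ≤ ∑ v, (G.neighborFinset v).card.choose t :=
    calc d * d.choose t ≤ #{v | d ≤ G.degree v} * d.choose t :=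
          Nat.mul_le_mul_right _ (G.le_card_filter_le_degree hG)
      _ ≤ ∑ v ∈ {v | d ≤ G.degree v}, (G.degree v).choose t := by
          rw [← smul_eq_mul]
          exact card_nsmul_le_sum _ _ _ fun v hv => Nat.choose_le_choose t (mem_filter.mp hv).2
      _ ≤ ∑ v, (G.neighborFinset v).card.choose t := sum_le_sum_of_subset (filter_subset _ _)
  obtain ⟨B, hB, hcommon⟩ := exists_card_eq_and_le_card_filter_subset (univ : Finset V)
    (fun v => G.neighborFinset v) ht (by rw [mul_comm]; exact hd.trans hsum)
  obtain ⟨C, hC, hCt⟩ := exists_subset_card_eq hcommon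
  refine ⟨B, C, hB, hCt, fun b hb c hc => ?_⟩
  have hBc := (mem_filter.mp (hC hc)).2
  exact (G.mem_neighborFinset c b).mp (hBc hb) |>.symm

end SimpleGraph

section Hypergraph

variable {n : ℕ}

def link (E : Finset (Finset (Fin n))) (S : Finset (Fin n)) : Finset (Fin n) :=
  {v | v ∉ S ∧ insert v S ∈ E}

theorem mem_link {E : Finset (Finset (Fin n))} {S : Finset (Fin n)} {v : Fin n} :
    v ∈ link E S ↔ v ∉ S ∧ insert v S ∈ E := by
  simp [link]

theorem coDeg_eq_card_link {E : Finset (Finset (Fin n))} {S : Finset (Fin n)}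
    (hE : ∀ e ∈ E, #e = #S + 1) : coDeg E S = #(link E S) := by
  refine (card_nbij (fun v => insert v S) (fun v hv => ?_) (fun v hv w hw hvw => ?_)
    (fun e he => ?_)).symm
  · obtain ⟨-, hvE⟩ := mem_link.mp hv
    exact mem_filter.mpr ⟨hvE, subset_insert v S⟩
  · have hv' := (mem_link.mp hv).1
    have hvw : insert v S = insert w S := hvw
    have : v ∈ insert w S := hvw ▸ mem_insert_self v S
    simpa [hv'] using this
  · obtain ⟨heE, hSe⟩ := mem_filter.mp he
    obtain ⟨v, hv⟩ := card_eq_one.mp (by rw [card_sdiff_of_subset hSe, hE e heE]; omega :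
      #(e \ S) = 1)
    have heq : insert v S = e := by rw [insert_eq, ← hv, sdiff_union_of_subset hSe]
    have hvS : v ∉ S := (mem_sdiff.mp (hv ▸ mem_singleton_self v)).2
    exact ⟨v, mem_link.mpr ⟨hvS, heq ▸ heE⟩, heq⟩

theorem card_link_le (E : Finset (Finset (Fin n))) (S : Finset (Fin n)) : #(link E S) ≤ n :=
  (card_le_univ _).trans_eq (Fintype.card_fin n)

theorem minPosCoDeg_le_coDeg {r : ℕ} {E : Finset (Finset (Fin n))} {S : Finset (Fin n)}
    (hS : #S = r - 1) (h : 0 < coDeg E S) : minPosCoDeg r n E ≤ coDeg E S :=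
  Nat.sInf_le ⟨S, hS, rfl, h⟩

theorem minPosCoDeg_le {E : Finset (Finset (Fin n))} (hE : ∀ e ∈ E, #e = 3) :
    minPosCoDeg 3 n E ≤ n := by
  rcases Nat.eq_zero_or_pos (minPosCoDeg 3 n E) with h | h
  · exact h ▸ Nat.zero_le n
  obtain ⟨S, hS, hSd, -⟩ := Nat.sInf_mem (Nat.nonempty_of_pos_sInf h)
  rw [minPosCoDeg, ← hSd, coDeg_eq_card_link (by simpa [hS] using hE)]
  exact card_link_le E S

def shadowGraph (E : Finset (Finset (Fin n))) : SimpleGraph (Fin n) where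
  Adj x y := x ≠ y ∧ 0 < coDeg E {x, y}
  symm := ⟨fun x y h => ⟨h.1.symm, pair_comm x y ▸ h.2⟩⟩
  loopless := ⟨fun _ h => h.1 rfl⟩

instance (E : Finset (Finset (Fin n))) : DecidableRel (shadowGraph E).Adj :=
  fun x y => inferInstanceAs (Decidable (x ≠ y ∧ _))

def commonLinkGraph (E : Finset (Finset (Fin n))) (A : Finset (Fin n)) : SimpleGraph (Fin n) where
  Adj x y := x ≠ y ∧ x ∉ A ∧ y ∉ A ∧ A ⊆ link E {x, y}
  symm := ⟨fun x y h => ⟨h.1.symm, h.2.2.1, h.2.1, pair_comm x y ▸ h.2.2.2⟩⟩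
  loopless := ⟨fun _ h => h.1 rfl⟩

instance (E : Finset (Finset (Fin n))) (A : Finset (Fin n)) :
    DecidableRel (commonLinkGraph E A).Adj :=
  fun x y => inferInstanceAs (Decidable (x ≠ y ∧ _))

section ThreeGraph

variable {E : Finset (Finset (Fin n))}

theorem shadowGraph_adj_of_mem {e : Finset (Fin n)} {x y : Fin n} (he : e ∈ E) (hx : x ∈ e)
    (hy : y ∈ e) (hxy : x ≠ y) : (shadowGraph E).Adj x y :=
  ⟨hxy, card_pos.mpr ⟨e, mem_filter.mpr ⟨he, insert_subset hx (singleton_subset_iff.mpr hy)⟩⟩⟩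

theorem shadowGraph_adj_of_mem_link {x y v : Fin n} (hv : v ∈ link E {x, y}) :
    (shadowGraph E).Adj x v := by
  obtain ⟨hvxy, hvE⟩ := mem_link.mp hv
  exact shadowGraph_adj_of_mem hvE (by simp) (mem_insert_self v _) fun h => hvxy (by simp [h])

theorem coDeg_pair_eq_card_link (hE : ∀ e ∈ E, #e = 3) {x y : Fin n} (hxy : x ≠ y) :
    coDeg E {x, y} = #(link E {x, y}) :=
  coDeg_eq_card_link (by rw [card_pair hxy]; exact hE)

theorem minPosCoDeg_le_card_link (hE : ∀ e ∈ E, #e = 3) {x y : Fin n}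
    (hxy : (shadowGraph E).Adj x y) :
    minPosCoDeg 3 n E ≤ #(link E {x, y}) :=
  coDeg_pair_eq_card_link hE hxy.1 ▸ minPosCoDeg_le_coDeg (card_pair hxy.1) hxy.2

theorem minPosCoDeg_le_degree_shadowGraph (hE : ∀ e ∈ E, #e = 3) {x y : Fin n}
    (hxy : (shadowGraph E).Adj x y) :
    minPosCoDeg 3 n E ≤ (shadowGraph E).degree x := by
  obtain ⟨w, hw⟩ := card_pos.mp
    ((coDeg_pair_eq_card_link hE hxy.1) ▸ hxy.2 : 0 < #(link E {x, y}))
  calc minPosCoDeg 3 n E ≤ #(link E {x, w}) :=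
        minPosCoDeg_le_card_link hE (shadowGraph_adj_of_mem_link hw)
    _ ≤ (shadowGraph E).degree x := card_le_card fun z hz =>
        ((shadowGraph E).mem_neighborFinset x z).mpr (shadowGraph_adj_of_mem_link hz)

theorem exists_shadowGraph_adj (hE : ∀ e ∈ E, #e = 3) (hne : E.Nonempty) :
    ∃ x y, (shadowGraph E).Adj x y := by
  obtain ⟨e, he⟩ := hne
  obtain ⟨x, y, z, hxy, -, -, rfl⟩ := card_eq_three.mp (hE e he)
  exact ⟨x, y, shadowGraph_adj_of_mem he (by simp) (by simp) hxy⟩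

theorem mul_self_minPosCoDeg_le_two_mul_card_edgeFinset (hE : ∀ e ∈ E, #e = 3)
    (hne : E.Nonempty) :
    minPosCoDeg 3 n E * minPosCoDeg 3 n E ≤ 2 * #(shadowGraph E).edgeFinset := by
  obtain ⟨x, y, hxy⟩ := exists_shadowGraph_adj hE hne
  rw [← (shadowGraph E).sum_degrees_eq_twice_card_edges]
  calc minPosCoDeg 3 n E * minPosCoDeg 3 n E
      ≤ #(link E {x, y}) * minPosCoDeg 3 n E :=
        Nat.mul_le_mul_right _ (minPosCoDeg_le_card_link hE hxy)
    _ ≤ ∑ v ∈ link E {x, y}, (shadowGraph E).degree v := by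
        rw [← smul_eq_mul]
        exact card_nsmul_le_sum _ _ _ fun v hv =>
          minPosCoDeg_le_degree_shadowGraph hE (shadowGraph_adj_of_mem_link hv).symm
    _ ≤ ∑ v, (shadowGraph E).degree v := sum_le_sum_of_subset (subset_univ _)

theorem le_minPosCoDeg (hE : ∀ e ∈ E, #e = 3) (hne : E.Nonempty) {m : ℕ}
    (h : ∀ x y, (shadowGraph E).Adj x y → m ≤ #(link E {x, y})) : m ≤ minPosCoDeg 3 n E := by
  obtain ⟨x, y, hxy⟩ := exists_shadowGraph_adj hE hne
  refine le_csInf ⟨_, {x, y}, card_pair hxy.1, rfl, hxy.2⟩ ?_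
  rintro _ ⟨S, hS, rfl, hpos⟩
  obtain ⟨x, y, hxy, rfl⟩ := card_eq_two.mp hS
  rw [coDeg_pair_eq_card_link hE hxy]
  exact h x y ⟨hxy, hpos⟩

theorem exists_card_eq_and_le_card_filter_subset_link (hE : ∀ e ∈ E, #e = 3) (hne : E.Nonempty)
    {c t m : ℕ} (hc : c ≤ minPosCoDeg 3 n E) (htn : t ≤ n)
    (h : 2 * m * n.choose t ≤ c * c * c.choose t) :
    ∃ A : Finset (Fin n), #A = t ∧
      m ≤ #{e ∈ (shadowGraph E).edgeFinset | A ⊆ link E e.toFinset} := by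
  refine exists_card_eq_and_le_card_filter_subset _ _ (by simpa using htn) ?_
  have hlink : ∀ e ∈ (shadowGraph E).edgeFinset, c ≤ #(link E e.toFinset) := by
    intro e he
    induction e using Sym2.ind with
    | h x y =>
      rw [Sym2.toFinset_mk_eq]
      exact hc.trans (minPosCoDeg_le_card_link hE ((shadowGraph E).mem_edgeFinset.mp he))
  have hsum : #(shadowGraph E).edgeFinset * c.choose t ≤
      ∑ e ∈ (shadowGraph E).edgeFinset, (#(link E e.toFinset)).choose t := by
    rw [← smul_eq_mul]
    exact card_nsmul_le_sum _ _ _ fun e he => Nat.choose_le_choose t (hlink e he)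
  have hcc : c * c ≤ 2 * #(shadowGraph E).edgeFinset :=
    (Nat.mul_le_mul hc hc).trans (mul_self_minPosCoDeg_le_two_mul_card_edgeFinset hE hne)
  rw [Fintype.card_fin]
  refine Nat.le_of_mul_le_mul_left ?_ two_pos
  calc 2 * (n.choose t * m) = 2 * m * n.choose t := by ring
    _ ≤ c * c * c.choose t := h
    _ ≤ 2 * #(shadowGraph E).edgeFinset * c.choose t := Nat.mul_le_mul_right _ hcc
    _ ≤ 2 * ∑ e ∈ (shadowGraph E).edgeFinset, (#(link E e.toFinset)).choose t := by
        rw [mul_assoc]; gcongr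

theorem exists_mul_card_le_card_edgeFinset_commonLinkGraph (hE : ∀ e ∈ E, #e = 3)
    (hne : E.Nonempty) {c t d : ℕ} (hc : c ≤ minPosCoDeg 3 n E) (htn : t ≤ n)
    (h : 2 * ((d + t) * n) * n.choose t ≤ c * c * c.choose t) :
    ∃ A : Finset (Fin n), #A = t ∧ d * n ≤ #(commonLinkGraph E A).edgeFinset := by
  obtain ⟨A, hA, hQ⟩ := exists_card_eq_and_le_card_filter_subset_link hE hne hc htn h
  set Q := {e ∈ (shadowGraph E).edgeFinset | A ⊆ link E e.toFinset}
  have hgood : {e ∈ Q | ∀ v ∈ e, v ∉ A} ⊆ (commonLinkGraph E A).edgeFinset := by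
    intro e he
    simp only [Q, mem_filter] at he
    obtain ⟨⟨he, hAe⟩, heA⟩ := he
    induction e using Sym2.ind with
    | h x y =>
      rw [Sym2.toFinset_mk_eq] at hAe
      exact (commonLinkGraph E A).mem_edgeFinset.mpr
        ⟨((shadowGraph E).mem_edgeFinset.mp he).1, heA x (by simp), heA y (by simp), hAe⟩
  have hbad : {e ∈ Q | ¬ ∀ v ∈ e, v ∉ A} ⊆
      A.biUnion fun a => (shadowGraph E).incidenceFinset a := by
    intro e he
    simp only [Q, mem_filter, not_forall, not_not] at he
    obtain ⟨⟨he, -⟩, v, hve, hvA⟩ := he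
    exact mem_biUnion.mpr ⟨v, hvA, ((shadowGraph E).mem_incidenceFinset v e).mpr
      ⟨(shadowGraph E).mem_edgeFinset.mp he, hve⟩⟩
  have hbad_card : #(A.biUnion fun a => (shadowGraph E).incidenceFinset a) ≤ t * n :=
    calc _ ≤ ∑ a ∈ A, #((shadowGraph E).incidenceFinset a) := card_biUnion_le
      _ ≤ ∑ _a ∈ A, n := sum_le_sum fun a _ => by
          rw [SimpleGraph.card_incidenceFinset_eq_degree]
          exact ((shadowGraph E).degree_lt_card_verts a).le.trans_eq (Fintype.card_fin n)
      _ = t * n := by rw [sum_const, smul_eq_mul, hA]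
  rw [← card_filter_add_card_filter_not (fun e => ∀ v ∈ e, v ∉ A)] at hQ
  have := card_le_card hgood
  have := card_le_card hbad
  exact ⟨A, hA, by linarith⟩

theorem exists_completeTripartite_of_le_minPosCoDeg (hE : ∀ e ∈ E, #e = 3) (hne : E.Nonempty)
    {c t d : ℕ} (hc : c ≤ minPosCoDeg 3 n E) (ht : 1 ≤ t) (htn : t ≤ n)
    (h₁ : 2 * ((d + t) * n) * n.choose t ≤ c * c * c.choose t)
    (h₂ : t * n.choose t ≤ d * d.choose t) :
    ∃ A B C : Finset (Fin n), #A = t ∧ #B = t ∧ #C = t ∧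
      Disjoint A B ∧ Disjoint A C ∧ Disjoint B C ∧ ∀ a ∈ A, ∀ b ∈ B, ∀ c ∈ C, {a, b, c} ∈ E := by
  obtain ⟨A, hA, hG⟩ := exists_mul_card_le_card_edgeFinset_commonLinkGraph hE hne hc htn h₁
  have : Nonempty (Fin n) := ⟨⟨0, by omega⟩⟩
  obtain ⟨B, C, hB, hC, hBC⟩ :=
    (commonLinkGraph E A).exists_completeBipartite_of_mul_card_le_card_edgeFinset
      (by simpa using htn) (by simpa using h₂) (by simpa using hG)
  obtain ⟨b₀, hb₀⟩ := card_pos.mp (hB ▸ ht : 0 < #B)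
  obtain ⟨c₀, hc₀⟩ := card_pos.mp (hC ▸ ht : 0 < #C)
  refine ⟨A, B, C, hA, hB, hC, ?_, ?_, ?_, fun a ha b hb c hc => ?_⟩
  · exact disjoint_right.mpr fun b hb => (hBC b hb c₀ hc₀).2.1
  · exact disjoint_right.mpr fun c hc => (hBC b₀ hb₀ c hc).2.2.1
  · exact disjoint_left.mpr fun b hb hbC => (hBC b hb b hbC).1 rfl
  · exact (mem_link.mp ((hBC b hb c hc).2.2.2 ha)).2

end ThreeGraph

def IsTripartite {α : Type*} (F : Finset (Finset α)) : Prop :=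
  ∃ g : α → Fin 3, ∀ e ∈ F, #e = 3 ∧ #(e.image g) = 3

theorem exists_eq_triple_of_card_image_eq_three {α : Type*} [DecidableEq α] {g : α → Fin 3}
    {e : Finset α} (he : #e = 3) (hg : #(e.image g) = 3) :
    ∃ a b c, g a = 0 ∧ g b = 1 ∧ g c = 2 ∧ e = {a, b, c} := by
  have himg : e.image g = univ := eq_univ_of_card _ (by simpa using hg)
  obtain ⟨a, ha, hga⟩ := mem_image.mp (himg ▸ mem_univ (0 : Fin 3))
  obtain ⟨b, hb, hgb⟩ := mem_image.mp (himg ▸ mem_univ (1 : Fin 3))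
  obtain ⟨c, hc, hgc⟩ := mem_image.mp (himg ▸ mem_univ (2 : Fin 3))
  have habc : #({a, b, c} : Finset α) = 3 :=
    card_eq_three.mpr ⟨a, b, c, by grind, by grind, by grind, rfl⟩
  refine ⟨a, b, c, hga, hgb, hgc, (eq_of_subset_of_card_le ?_ (by omega)).symm⟩
  simp [insert_subset_iff, ha, hb, hc]

theorem IsTripartite.contains {α V : Type*} [Fintype α] [DecidableEq α] [DecidableEq V]
    {F : Finset (Finset α)} (hF : IsTripartite F) {E : Finset (Finset V)} {A B C : Finset V}
    (hA : Fintype.card α ≤ #A) (hB : Fintype.card α ≤ #B) (hC : Fintype.card α ≤ #C)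
    (hAB : Disjoint A B) (hAC : Disjoint A C) (hBC : Disjoint B C)
    (hE : ∀ a ∈ A, ∀ b ∈ B, ∀ c ∈ C, {a, b, c} ∈ E) : Contains F E := by
  obtain ⟨g, hg⟩ := hF
  set X : Fin 3 → Finset V := ![A, B, C]
  have hX : ∀ i, ∃ ψ : α → V, Function.Injective ψ ∧ ∀ v, ψ v ∈ X i := by
    intro i
    obtain ⟨φ⟩ := Function.Embedding.nonempty_of_card_le (α := α) (β := X i) (by
      rw [Fintype.card_coe]; fin_cases i <;> assumption)
    exact ⟨fun v => φ v, Subtype.val_injective.comp φ.injective, fun v => (φ v).2⟩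
  choose ψ hψinj hψX using hX
  have hXdisj : ∀ i j, i ≠ j → Disjoint (X i) (X j) := by
    intro i j hij
    fin_cases i <;> fin_cases j <;> simp_all [X, disjoint_comm]
  refine ⟨fun v => ψ (g v) v, fun u v huv => ?_, fun e he => ?_⟩
  · replace huv : ψ (g u) u = ψ (g v) v := huv
    have hguv : g u = g v := by
      by_contra hne
      exact disjoint_left.mp (hXdisj _ _ hne) (hψX _ u) (huv ▸ hψX _ v)
    simp only [hguv] at huv
    exact hψinj _ huv
  · obtain ⟨a, b, c, ha, hb, hc, rfl⟩ :=
      exists_eq_triple_of_card_image_eq_three (hg e he).1 (hg e he).2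
    simp only [image_insert, image_singleton, ha, hb, hc]
    exact hE _ (hψX 0 a) _ (hψX 1 b) _ (hψX 2 c)

def completeTripartite {V : Type*} [Fintype V] [DecidableEq V] (f : V → Fin 3) :
    Finset (Finset V) :=
  {e | #e = 3 ∧ #(e.image f) = 3}

theorem not_contains_completeTripartite {α V : Type*} [DecidableEq α] [Fintype V] [DecidableEq V]
    {F : Finset (Finset α)} (hF : ¬ IsTripartite F) (f : V → Fin 3) :
    ¬ Contains F (completeTripartite f) := by
  rintro ⟨φ, hφ, hFφ⟩
  refine hF ⟨f ∘ φ, fun e he => ?_⟩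
  have := hFφ e he
  simp only [completeTripartite, mem_filter, mem_univ, true_and, card_image_of_injective _ hφ,
    image_image] at this
  exact this

theorem completeTripartite_nonempty {V : Type*} [Fintype V] [DecidableEq V] {f : V → Fin 3}
    (hf : Function.Surjective f) : (completeTripartite f).Nonempty := by
  obtain ⟨a, ha⟩ := hf 0
  obtain ⟨b, hb⟩ := hf 1
  obtain ⟨c, hc⟩ := hf 2
  refine ⟨{a, b, c}, mem_filter.mpr ⟨mem_univ _, ?_, ?_⟩⟩
  · exact card_eq_three.mpr ⟨a, b, c, by grind, by grind, by grind, rfl⟩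
  · simp [ha, hb, hc]

theorem le_minPosCoDeg_completeTripartite {f : Fin n → Fin 3} (hf : Function.Surjective f)
    {m : ℕ} (hm : ∀ j, m ≤ #{v | f v = j}) : m ≤ minPosCoDeg 3 n (completeTripartite f) := by
  have hE : ∀ e ∈ completeTripartite f, #e = 3 := fun e he => (mem_filter.mp he).2.1
  refine le_minPosCoDeg hE (completeTripartite_nonempty hf) fun x y hxy => ?_
  obtain ⟨e, he⟩ := card_pos.mp hxy.2
  obtain ⟨heE, hxye⟩ := mem_filter.mp he
  obtain ⟨-, he3, hfe⟩ := mem_filter.mp heE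
  have hfxy : f x ≠ f y := fun h => hxy.1 <| card_image_iff.mp (hfe.trans he3.symm)
    (hxye (by simp)) (hxye (by simp)) h
  obtain ⟨j, hjx, hjy⟩ : ∃ j, j ≠ f x ∧ j ≠ f y :=
    (by decide : ∀ i i' : Fin 3, ∃ j, j ≠ i ∧ j ≠ i') (f x) (f y)
  refine (hm j).trans (card_le_card fun v hv => ?_)
  have hfv : f v = j := (mem_filter.mp hv).2
  have hvx : v ≠ x := by rintro rfl; exact hjx hfv.symm
  have hvy : v ≠ y := by rintro rfl; exact hjy hfv.symm
  refine mem_link.mpr ⟨by simp [hvx, hvy], mem_filter.mpr ⟨mem_univ _, ?_, ?_⟩⟩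
  · exact card_eq_three.mpr ⟨v, x, y, hvx, hvy, hxy.1, rfl⟩
  · rw [image_insert, image_insert, image_singleton, hfv]
    exact card_eq_three.mpr ⟨j, f x, f y, hjx, hjy, hfxy, rfl⟩

theorem div_three_le_card_filter_ofNat_eq (j : Fin 3) :
    n / 3 ≤ #{v : Fin n | Fin.ofNat 3 v = j} := by
  have hj := j.isLt
  have := card_le_card_of_injOn (s := (univ : Finset (Fin (n / 3))))
    (t := {v : Fin n | Fin.ofNat 3 v = j}) (fun i => ⟨3 * i + j, by have := i.isLt; omega⟩)
    (fun i _ => mem_filter.mpr ⟨mem_univ _, Fin.ext (by simp only [Fin.val_ofNat]; omega)⟩)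
    (fun i _ i' _ h => Fin.ext (by simpa using h))
  simpa using this

section CoPlusEx

variable {α : Type*} [DecidableEq α] {F : Finset (Finset α)}

theorem coPlusEx_le_of_forall {r m : ℕ} (h : ∀ E : Finset (Finset (Fin n)),
    (∀ e ∈ E, #e = r) → E.Nonempty → ¬ Contains F E → minPosCoDeg r n E ≤ m) :
    coPlusEx r n F ≤ m :=
  csSup_le' (by rintro _ ⟨E, hE, hne, hF, rfl⟩; exact h E hE hne hF)

theorem coPlusEx_le_self : coPlusEx 3 n F ≤ n :=
  coPlusEx_le_of_forall fun _ hE _ _ => minPosCoDeg_le hE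

theorem minPosCoDeg_le_coPlusEx {E : Finset (Finset (Fin n))} (hE : ∀ e ∈ E, #e = 3)
    (hne : E.Nonempty) (hF : ¬ Contains F E) : minPosCoDeg 3 n E ≤ coPlusEx 3 n F :=
  le_csSup ⟨n, by rintro _ ⟨E', hE', -, -, rfl⟩; exact minPosCoDeg_le hE'⟩ ⟨E, hE, hne, hF, rfl⟩

theorem div_three_le_coPlusEx (hF : ¬ IsTripartite F) (n : ℕ) : n / 3 ≤ coPlusEx 3 n F := by
  rcases lt_or_ge n 3 with hn | hn
  · simp [Nat.div_eq_of_lt hn]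
  set f : Fin n → Fin 3 := fun v => Fin.ofNat 3 v
  have hclass := div_three_le_card_filter_ofNat_eq (n := n)
  have hf : Function.Surjective f := fun j =>
    let ⟨v, hv⟩ := card_pos.mp ((Nat.div_pos hn three_pos).trans_le (hclass j))
    ⟨v, (mem_filter.mp hv).2⟩
  exact (le_minPosCoDeg_completeTripartite hf hclass).trans <| minPosCoDeg_le_coPlusEx
    (fun e he => (mem_filter.mp he).2.1) (completeTripartite_nonempty hf)
    (not_contains_completeTripartite hF f)

theorem IsTripartite.eventually_mul_coPlusEx_le [Fintype α] (hF : IsTripartite F) {k : ℕ}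
    (hk : 0 < k) : ∀ᶠ n in atTop, k * coPlusEx 3 n F ≤ n := by
  set t := Fintype.card α + 1
  obtain ⟨c₀, hc₀⟩ := exists_codegree_threshold t k
  filter_upwards [eventually_ge_atTop (k * c₀ + t)] with n hn
  rw [mul_comm, ← Nat.le_div_iff_mul_le hk]
  refine coPlusEx_le_of_forall fun E hE hne hFE => ?_
  by_contra! hlt
  rw [Nat.div_lt_iff_lt_mul hk, mul_comm] at hlt
  obtain ⟨d, h₁, h₂⟩ := hc₀ _ n (by nlinarith) hlt
  obtain ⟨A, B, C, hA, hB, hC, hAB, hAC, hBC, hABC⟩ :=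
    exists_completeTripartite_of_le_minPosCoDeg hE hne le_rfl (by omega) (by omega) h₁ h₂
  exact hFE (hF.contains (by omega) (by omega) (by omega) hAB hAC hBC hABC)

theorem IsTripartite.tendsto_coPlusEx_div [Fintype α] (hF : IsTripartite F) :
    Tendsto (fun n : ℕ => (coPlusEx 3 n F : ℝ) / n) atTop (𝓝 0) := by
  refine tendsto_order.2 ⟨fun a ha => Eventually.of_forall fun n =>
    ha.trans_le (by positivity), fun ε hε => ?_⟩
  obtain ⟨k, hk⟩ := exists_nat_one_div_lt hε
  filter_upwards [hF.eventually_mul_coPlusEx_le k.succ_pos, eventually_gt_atTop 0]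
    with n hkn hn
  refine lt_of_le_of_lt ?_ hk
  rw [div_le_div_iff₀ (by positivity) (by positivity)]
  have : coPlusEx 3 n F * (k + 1) ≤ 1 * n := by linarith
  exact_mod_cast this

end CoPlusEx

end Hypergraph

theorem one_third_le_limsup_div {f : ℕ → ℕ} (hlow : ∀ n, n / 3 ≤ f n) (hup : ∀ n, f n ≤ n) :
    1 / 3 ≤ limsup (fun n : ℕ => (f n : ℝ) / n) atTop := by
  have hlim : Tendsto (fun n : ℕ => 1 / 3 - 1 / (n : ℝ)) atTop (𝓝 (1 / 3)) := by
    simpa using (tendsto_const_nhds (x := (1 / 3 : ℝ))).sub tendsto_one_div_atTop_nhds_zero_nat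
  rw [← hlim.limsup_eq]
  refine limsup_le_limsup ?_ hlim.isCoboundedUnder_le
    (isBoundedUnder_of ⟨1, fun n => div_le_one_of_le₀ (by exact_mod_cast hup n) (by positivity)⟩)
  filter_upwards [eventually_gt_atTop 0] with n hn
  have hn' : (0 : ℝ) < n := by exact_mod_cast hn
  have : (n : ℝ) ≤ 3 * f n + 3 := by exact_mod_cast (by have := hlow n; omega : n ≤ 3 * f n + 3)
  rw [sub_le_iff_le_add, ← add_div, le_div_iff₀ hn']
  linarith

theorem coPlusEx_density_jump_general {α : Type} [Fintype α] [DecidableEq α]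
    (F : Finset (Finset α))
    (hpos : 0 < Filter.limsup (fun n : ℕ => (coPlusEx 3 n F : ℝ) / n) Filter.atTop) :
    1 / 3 ≤ Filter.limsup (fun n : ℕ => (coPlusEx 3 n F : ℝ) / n) Filter.atTop := by
  by_cases hF : IsTripartite F
  · rw [hF.tendsto_coPlusEx_div.limsup_eq] at hpos
    exact (lt_irrefl 0 hpos).elim
  · exact one_third_le_limsup_div (div_three_le_coPlusEx hF) fun _ => coPlusEx_le_self

/-- The positive co-degree density of a 3-graph jumps from `0` to `1/3`:
if `limsup co⁺ex(n,F)/n > 0` then `limsup co⁺ex(n,F)/n ≥ 1/3`. -/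
theorem coPlusEx_density_jump {α : Type} [Fintype α] [DecidableEq α]
    (F : Finset (Finset α)) (hcard : ∀ e ∈ F, e.card = 3) (hne : F.Nonempty)
    (hpos : 0 < Filter.limsup (fun n : ℕ => (coPlusEx 3 n F : ℝ) / n) Filter.atTop) :
    1 / 3 ≤ Filter.limsup (fun n : ℕ => (coPlusEx 3 n F : ℝ) / n) Filter.atTop :=
  coPlusEx_density_jump_general F hpos
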